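/- For each fixed integer k ≥ 0 and all n ≥ 1, the graph Z_{n,k} has diameter at most n/(k+1) + 2^k. -/

import Mathlib

open SimpleGraph

/-- `κ(n)`: `0` for `n ≤ 1`, and `max{1, ⌈log₂ n − 2 log₂ log₂ n⌉}` for `n ≥ 2`. -/
noncomputable def kappa (n : ℕ) : ℕ :=
  if n ≤ 1 then 0
  else max 1 (Int.toNat ⌈Real.logb 2 (n : ℝ) - 2 * Real.logb 2 (Real.logb 2 (n : ℝ))⌉)

/-- XOR the first `k` bits with the last `k` bits of a binary string of length `n`. -/
def phiAux (n k : ℕ) (x : Fin n → ZMod 2) : Fin n → ZMod 2 :=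
  fun i => if h : i.val < k ∧ n - k + i.val < n then x i + x ⟨n - k + i.val, h.2⟩ else x i

/-- The permutation `φ` on `Z₂ⁿ`. -/
noncomputable def phi (n : ℕ) : (Fin n → ZMod 2) → (Fin n → ZMod 2) := phiAux n (kappa n)

/-- The Z-cube `H_n`, a graph on the binary strings of length `n`.  Bit `0` is the
"first" bit; `Fin.tail x` is the string `x` with its first bit removed. -/
noncomputable def Zcube : (n : ℕ) → SimpleGraph (Fin n → ZMod 2)
  | 0 => ⊥
  | (n + 1) =>
    { Adj := fun x y =>
        (x 0 = y 0 ∧ (Zcube n).Adj (Fin.tail x) (Fin.tail y)) ∨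
        (x 0 ≠ y 0 ∧ (Fin.tail y = phi n (Fin.tail x) ∨ Fin.tail x = phi n (Fin.tail y))),
      symm := by
        constructor
        rintro x y (⟨h1, h2⟩ | ⟨h1, h2⟩)
        · exact Or.inl ⟨h1.symm, h2.symm⟩
        · exact Or.inr ⟨h1.symm, h2.symm⟩
      loopless := by
        constructor
        rintro x (⟨h1, h2⟩ | ⟨h1, h2⟩)
        · exact (Zcube n).loopless.irrefl _ h2
        · exact h1 rfl }
/-- `σ_n = Σ_{j ∈ S(n)} j / κ(j)²`, where `S(n) = {j ≤ n : κ(j) = κ(j−1)+1}`. -/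
noncomputable def sigmaZ (n : ℕ) : ℝ :=
  ∑ j ∈ (Finset.range (n + 1)).filter (fun j => kappa j = kappa (j - 1) + 1),
    (j : ℝ) / (kappa j : ℝ) ^ 2

/-- The last `k` bits of a binary string of length `n` (for `k ≤ n`). -/
def lastBits (k n : ℕ) (v : Fin n → ZMod 2) : Fin k → ZMod 2 :=
  fun i => if h : n - k + i.val < n then v ⟨n - k + i.val, h⟩ else 0

/-- A walk in `H_n` is `k`-robust if every binary string of length `k` occurs as the
last `k` bits of some vertex of the walk. -/
def IsRobustWalk (k : ℕ) {n : ℕ} {x y : Fin n → ZMod 2} (W : (Zcube n).Walk x y) : Prop :=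
  ∀ z : Fin k → ZMod 2, ∃ v ∈ W.support, lastBits k n v = z

/-- The permutation `φ_k` on `Z₂ⁿ`. -/
def phiK (k n : ℕ) (x : Fin n → ZMod 2) : Fin n → ZMod 2 :=
  if n ≤ k then x
  else if n ≤ 2 * k then
    fun i => if h : i.val < n - k ∧ k + i.val < n then x i + x ⟨k + i.val, h.2⟩ else x i
  else
    fun i => if h : i.val < k ∧ n - k + i.val < n then x i + x ⟨n - k + i.val, h.2⟩ else x i

/-- The Z-cube `Z_{n,k}`. -/
def ZcubeK (k : ℕ) : (n : ℕ) → SimpleGraph (Fin n → ZMod 2)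
  | 0 => ⊥
  | (n + 1) =>
    { Adj := fun x y =>
        (x 0 = y 0 ∧ (ZcubeK k n).Adj (Fin.tail x) (Fin.tail y)) ∨
        (x 0 ≠ y 0 ∧ (Fin.tail y = phiK k n (Fin.tail x) ∨ Fin.tail x = phiK k n (Fin.tail y))),
      symm := by
        constructor
        rintro x y (⟨h1, h2⟩ | ⟨h1, h2⟩)
        · exact Or.inl ⟨h1.symm, h2.symm⟩
        · exact Or.inr ⟨h1.symm, h2.symm⟩
      loopless := by
        constructor
        rintro x (⟨h1, h2⟩ | ⟨h1, h2⟩)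
        · exact (ZcubeK k n).loopless.irrefl _ h2
        · exact h1 rfl }

/-- The subgraph of `H_n` consisting of the cross edges, i.e. the edges between the
two copies `0H_{n−1}` and `1H_{n−1}` (edges whose endpoints differ in the first bit). -/
noncomputable def crossSubgraph (n : ℕ) : (Zcube n).Subgraph where
  verts := Set.univ
  Adj x y := ∃ h : 0 < n, (Zcube n).Adj x y ∧ x ⟨0, h⟩ ≠ y ⟨0, h⟩
  adj_sub := by rintro x y ⟨h, h1, h2⟩; exact h1
  edge_vert := by intro x y _; trivial
  symm := by constructor; rintro x y ⟨h, h1, h2⟩; exact ⟨h, h1.symm, h2.symm⟩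

/-- A graph is Hamiltonian connected if any two distinct vertices are joined by a
Hamiltonian path. -/
def HamiltonianConnected {V : Type*} [DecidableEq V] (G : SimpleGraph V) : Prop :=
  ∀ x y : V, x ≠ y → ∃ p : G.Walk x y, p.IsHamiltonian

/-- The graph obtained from two disjoint copies of `G` by adding the perfect matching
`(u, false) ∼ (ψ u, true)` given by a bijection `ψ`. -/
def matchingJoin {V : Type*} (G : SimpleGraph V) (ψ : V ≃ V) : SimpleGraph (V × Bool) where
  Adj a b := (a.2 = b.2 ∧ G.Adj a.1 b.1) ∨
    (a.2 = false ∧ b.2 = true ∧ b.1 = ψ a.1) ∨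
    (a.2 = true ∧ b.2 = false ∧ a.1 = ψ b.1)
  symm := by
    constructor
    rintro ⟨u, i⟩ ⟨v, j⟩ (⟨h1, h2⟩ | ⟨h1, h2, h3⟩ | ⟨h1, h2, h3⟩)
    · exact Or.inl ⟨h1.symm, h2.symm⟩
    · exact Or.inr (Or.inr ⟨h2, h1, h3⟩)
    · exact Or.inr (Or.inl ⟨h2, h1, h3⟩)
  loopless := by
    constructor
    rintro ⟨u, i⟩ (⟨h1, h2⟩ | ⟨h1, h2, h3⟩ | ⟨h1, h2, h3⟩)
    · exact G.loopless.irrefl _ h2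
    · simp_all
    · simp_all


/-!
Split a vertex of `Z_{n,k}` into a prefix of `n - k` bits and a suffix of `k` bits. Crossing the
matching edge at depth `p` flips bit `p`; if `p < n - k` it also adds to the `k` bits after `p` a
pattern read off the suffix, which it leaves unchanged, and if `p ≥ n - k` it does nothing else.
So the suffix moves in the hypercube `Q_k`, and while the suffix equals `t` we may apply to the
prefix any correction whose pattern is `t`. Clearing the prefix of `x + y` greedily from left to
right, each correction clears a window of `k + 1` bits, so `n / (k + 1)` corrections suffice.
Since `Q_k` is Hamiltonian laceable, a walk of length at most `2 ^ k` from the suffix of `x` to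
that of `y` visits every suffix, and each correction is made when the walk passes its pattern.
-/

lemma ZMod.two_eq_or_eq_add_one (a b : ZMod 2) : b = a ∨ b = a + 1 := by
  revert a b; decide

def hypercube (k : ℕ) : SimpleGraph (Fin k → ZMod 2) where
  Adj s t := ∃ j, t = s + Pi.single j 1
  symm := by
    constructor
    rintro s t ⟨j, rfl⟩
    refine ⟨j, ?_⟩
    rw [add_assoc, ← Pi.single_add, CharTwo.add_self_eq_zero, Pi.single_zero, add_zero]
  loopless := by
    constructor
    rintro s ⟨j, h⟩
    simpa using congrFun h j

namespace hypercube

open SimpleGraph.Walk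

variable {k : ℕ}

lemma adj_add_single (s : Fin k → ZMod 2) (j : Fin k) :
    (hypercube k).Adj s (s + Pi.single j 1) := ⟨j, rfl⟩

lemma sum_eq_add_one_of_adj {s t : Fin k → ZMod 2} (h : (hypercube k).Adj s t) :
    ∑ j, t j = ∑ j, s j + 1 := by
  obtain ⟨j, rfl⟩ := h
  simp [Finset.sum_add_distrib]

def consHom (α : ZMod 2) : hypercube k →g hypercube (k + 1) where
  toFun s := Fin.cons α s
  map_rel' := by
    rintro s _ ⟨j, rfl⟩
    exact ⟨j.succ, by ext i; cases i using Fin.cases <;> simp [Pi.single_apply]⟩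

lemma consHom_apply (α : ZMod 2) (s : Fin k → ZMod 2) : consHom α s = Fin.cons α s := rfl

lemma consHom_inj {α β : ZMod 2} {s t : Fin k → ZMod 2} :
    consHom α s = consHom β t ↔ α = β ∧ s = t :=
  Fin.cons_inj (α := fun _ => ZMod 2)

lemma adj_consHom_add_one (α : ZMod 2) (s : Fin k → ZMod 2) :
    (hypercube (k + 1)).Adj (consHom α s) (consHom (α + 1) s) :=
  ⟨0, by ext i; cases i using Fin.cases <;> simp [consHom_apply]⟩

lemma consHom_mem_support_map_consHom {α β : ZMod 2} {a b z : Fin k → ZMod 2}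
    (w : (hypercube k).Walk a b) :
    consHom β z ∈ (w.map (consHom α)).support ↔ β = α ∧ z ∈ w.support := by
  simp [SimpleGraph.Walk.support_map, consHom_inj, eq_comm, and_comm]

lemma forall_of_forall_consHom {P : (Fin (k + 1) → ZMod 2) → Prop} (α : ZMod 2)
    (h₀ : ∀ z, P (consHom α z)) (h₁ : ∀ z, P (consHom (α + 1) z)) : ∀ z, P z := by
  intro z
  induction z using Fin.consCases with | _ γ z =>
  obtain hγ | hγ := ZMod.two_eq_or_eq_add_one α γ <;> subst γ
  exacts [h₀ z, h₁ z]

/-- A walk with fewer than `2 ^ k` edges through all `2 ^ k` vertices is a Hamiltonian path. -/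
def IsLaceable (k : ℕ) : Prop :=
  ∀ a b : Fin k → ZMod 2, ∑ j, a j ≠ ∑ j, b j →
    ∃ w : (hypercube k).Walk a b, w.length < 2 ^ k ∧ ∀ z, z ∈ w.support

/-- Detour through the copy `α + 1` along the first edge `a ~ c` of a covering walk of the
copy `α`. -/
lemma IsLaceable.exists_walk_consHom_consHom (h : IsLaceable k) (α : ZMod 2)
    {a b : Fin k → ZMod 2} (hab : ∑ j, a j ≠ ∑ j, b j) :
    ∃ w : (hypercube (k + 1)).Walk (consHom α a) (consHom α b),
      w.length < 2 ^ (k + 1) ∧ ∀ z, z ∈ w.support := by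
  obtain ⟨w, hw, hcov⟩ := h a b hab
  cases w with
  | nil => exact absurd rfl hab
  | @cons _ c _ hac w =>
    obtain ⟨u, hu, hucov⟩ := h a c (by simp [sum_eq_add_one_of_adj hac])
    refine ⟨cons (adj_consHom_add_one α a) ((u.map (consHom (α + 1))).append
      (cons (adj_consHom_add_one α c).symm (w.map (consHom α)))), ?_, ?_⟩
    · simp only [length_cons, length_append, length_map] at hw ⊢
      rw [pow_succ]
      omega
    · refine forall_of_forall_consHom α (fun z => ?_) (fun z => ?_)
      · simpa [mem_support_append_iff, consHom_mem_support_map_consHom, consHom_inj] using hcov z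
      · simp [mem_support_append_iff, consHom_inj, hucov z]

/-- Cover the copy `α` up to a neighbour `c` of `b`, cross, and cover the copy `α + 1`. -/
lemma IsLaceable.exists_walk_consHom_consHom_add_one (h : IsLaceable k) (α : ZMod 2)
    {a b : Fin k → ZMod 2} (hab : ∑ j, a j = ∑ j, b j) :
    ∃ w : (hypercube (k + 1)).Walk (consHom α a) (consHom (α + 1) b),
      w.length < 2 ^ (k + 1) ∧ ∀ z, z ∈ w.support := by
  rcases Nat.eq_zero_or_pos k with rfl | hk
  · obtain rfl : a = b := Subsingleton.elim _ _
    refine ⟨cons (adj_consHom_add_one α a) nil, by simp, ?_⟩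
    refine forall_of_forall_consHom α (fun z => ?_) (fun z => ?_) <;>
      simp [Subsingleton.elim z a]
  set c := b + Pi.single ⟨0, hk⟩ 1
  have hbc : (hypercube k).Adj c b := (adj_add_single b _).symm
  obtain ⟨u, hu, hucov⟩ := h a c (by simp [hab, sum_eq_add_one_of_adj hbc.symm])
  obtain ⟨w, hw, hwcov⟩ := h c b (by simp [sum_eq_add_one_of_adj hbc.symm])
  refine ⟨(u.map (consHom α)).append
    (cons (adj_consHom_add_one α c) (w.map (consHom (α + 1)))), ?_, ?_⟩
  · simp only [length_cons, length_append, length_map]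
    rw [pow_succ]
    omega
  · refine forall_of_forall_consHom α (fun z => ?_) (fun z => ?_)
    · simp [mem_support_append_iff, consHom_inj, hucov z]
    · simp [mem_support_append_iff, consHom_inj, hwcov z]

lemma IsLaceable.succ (h : IsLaceable k) : IsLaceable (k + 1) := by
  intro a b hab
  induction a using Fin.consCases with | _ α a =>
  induction b using Fin.consCases with | _ β b =>
  simp only [Fin.sum_cons] at hab
  rw [← consHom_apply α a, ← consHom_apply β b]
  obtain hβ | hβ := ZMod.two_eq_or_eq_add_one α β <;> subst β
  · exact h.exists_walk_consHom_consHom α (by simpa using hab)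
  · refine h.exists_walk_consHom_consHom_add_one α ?_
    by_contra hne
    exact hab (by linear_combination (ZMod.two_eq_or_eq_add_one _ _).resolve_left hne)

theorem isLaceable : ∀ k, IsLaceable k
  | 0 => fun _ _ hab => absurd (by simp) hab
  | k + 1 => (isLaceable k).succ

theorem exists_covering_walk (a b : Fin k → ZMod 2) :
    ∃ w : (hypercube k).Walk a b, w.length ≤ 2 ^ k ∧ ∀ z, z ∈ w.support := by
  by_cases hab : ∑ j, a j ≠ ∑ j, b j
  · obtain ⟨w, hw, hcov⟩ := isLaceable k a b hab
    exact ⟨w, hw.le, hcov⟩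
  rcases Nat.eq_zero_or_pos k with rfl | hk
  · obtain rfl : a = b := Subsingleton.elim _ _
    exact ⟨nil, by simp, fun z => by simp [Subsingleton.elim z a]⟩
  set c := b + Pi.single ⟨0, hk⟩ 1
  have hcb : (hypercube k).Adj c b := (adj_add_single b _).symm
  obtain ⟨w, hw, hcov⟩ := isLaceable k a c
    (by simp [not_not.mp hab, sum_eq_add_one_of_adj hcb.symm])
  exact ⟨w.concat hcb, by simpa using hw, fun z => by simp [support_concat, hcov z]⟩

end hypercube

section lastBits

variable {k n : ℕ}

lemma lastBits_add (u v : Fin n → ZMod 2) :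
    lastBits k n (u + v) = lastBits k n u + lastBits k n v := by
  ext j
  simp only [lastBits, Pi.add_apply]
  split_ifs <;> simp

lemma lastBits_add_single (hk : k ≤ n) (v : Fin n → ZMod 2) (j : Fin k) :
    lastBits k n (v + Pi.single ⟨n - k + j, by omega⟩ 1) = lastBits k n v + Pi.single j 1 := by
  ext j'
  simp [lastBits, Pi.single_apply, Fin.ext_iff, show n - k + (j' : ℕ) < n by omega]

lemma eq_of_lastBits_eq {u v : Fin n → ZMod 2} (h : lastBits k n u = lastBits k n v)
    (hlow : ∀ i : Fin n, (i : ℕ) < n - k → u i = v i) : u = v := by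
  ext i
  by_cases hi : (i : ℕ) < n - k
  · exact hlow i hi
  · have := congrFun h ⟨i - (n - k), by omega⟩
    simpa only [lastBits, show n - k + (i - (n - k)) = i by omega, dif_pos i.isLt] using this

end lastBits

namespace ZcubeK

/-- `move k n p v` is the neighbour of `v` across the matching edge of the copy of
`Z_{n-p,k}` in which `v` lies. -/
def move (k : ℕ) : (n : ℕ) → ℕ → (Fin n → ZMod 2) → Fin n → ZMod 2
  | 0, _, v => v
  | n + 1, 0, v => Fin.cons (v 0 + 1) (phiK k n (Fin.tail v))
  | n + 1, p + 1, v => Fin.cons (v 0) (move k n p (Fin.tail v))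

theorem adj_move {k : ℕ} : ∀ {n p : ℕ}, p < n → ∀ v, (ZcubeK k n).Adj v (move k n p v)
  | n + 1, 0, _, v => Or.inr ⟨by simp [move], Or.inl (by simp [move])⟩
  | n + 1, p + 1, hp, v =>
    Or.inl ⟨by simp [move], by simpa [move] using adj_move (by omega : p < n) (Fin.tail v)⟩

theorem move_eq_add_single {k : ℕ} : ∀ {n p : ℕ} (hp : p < n), n - k ≤ p →
    ∀ v, move k n p v = v + Pi.single ⟨p, hp⟩ 1
  | n + 1, 0, _, hpk, v => by
    ext i
    cases i using Fin.cases <;> simp [move, phiK, Fin.tail, show n ≤ k by omega]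
  | n + 1, p + 1, hp, hpk, v => by
    ext i
    cases i using Fin.cases
    · simp [move]
    · simp [move, move_eq_add_single (k := k) (by omega : p < n) (by omega), Pi.single_apply,
        Fin.ext_iff, Fin.tail]

/-- The change made by `move k n p` when `p < n - k` and the suffix is `t`. Below depth `p`
there remain `m = n - 1 - p` bits, on which `φ_k` adds bit `j + max k (m - k)` to bit `j`
for the `j < k` with `j + k < m`. -/
def moveEffect (k n p : ℕ) (t : Fin k → ZMod 2) : Fin n → ZMod 2 := fun i =>
  if (i : ℕ) = p then 1
  else if h : p < i ∧ i ≤ p + k ∧ i + k < n then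
    t ⟨i + max k (n - 1 - k - p) - (n - k), by omega⟩
  else 0

theorem move_eq_add_moveEffect {k : ℕ} : ∀ {n p : ℕ}, p < n - k →
    ∀ v, move k n p v = v + moveEffect k n p (lastBits k n v)
  | 0, _, hp, _ => by omega
  | n + 1, 0, hp, v => by
    ext i
    cases i using Fin.cases with
    | zero => simp [move, moveEffect]
    | succ i =>
      simp only [move, phiK, moveEffect, lastBits, Fin.cons_succ, Fin.tail, Pi.add_apply,
        Fin.val_succ]
      split_ifs <;> (try dsimp only) <;> (try split_ifs) <;>
        first
        | contradiction
        | omega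
        | (simp [Fin.tail]; done)
        | (rw [add_right_inj]; congr 1; ext; simp; omega)
  | n + 1, p + 1, hp, v => by
    ext i
    cases i using Fin.cases with
    | zero => simp [move, moveEffect]
    | succ i =>
      simp only [move, Fin.cons_succ, move_eq_add_moveEffect (k := k) (by omega : p < n - k),
        moveEffect, lastBits, Fin.tail, Pi.add_apply, Fin.val_succ]
      split_ifs <;>
        first
        | contradiction
        | omega
        | (simp; done)
        | (rw [add_right_inj]; congr 1; ext; simp; omega)

variable {k n : ℕ}

lemma moveEffect_apply_of_le {p : ℕ} (hp : p < n - k) (t : Fin k → ZMod 2) {i : Fin n}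
    (hi : n - k ≤ i) : moveEffect k n p t i = 0 := by
  simp only [moveEffect]
  rw [if_neg (by omega), dif_neg (by omega)]

lemma lastBits_moveEffect {p : ℕ} (hp : p < n - k) (t : Fin k → ZMod 2) :
    lastBits k n (moveEffect k n p t) = 0 := by
  ext j
  simp only [lastBits]
  split_ifs with h
  · exact moveEffect_apply_of_le hp t (by simp)
  · rfl

theorem exists_moveEffect_eqOn {p : ℕ} (hp : p < n - k) (d : Fin n → ZMod 2)
    (hd : ∀ i : Fin n, (i : ℕ) < p → d i = 0) (hdp : ∀ i : Fin n, (i : ℕ) = p → d i = 1) :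
    ∃ t, ∀ i : Fin n, (i : ℕ) ≤ p + k → (i : ℕ) < n - k → moveEffect k n p t i = d i := by
  refine ⟨fun j => d ⟨n - k + j - max k (n - 1 - k - p), by omega⟩, fun i hik hin => ?_⟩
  simp only [moveEffect]
  split_ifs with h1 h2
  · exact (hdp i h1).symm
  · congr 1; ext; simp only; omega
  · exact (hd i (by omega)).symm

def totalEffect (k n : ℕ) (cs : List (ℕ × (Fin k → ZMod 2))) : Fin n → ZMod 2 :=
  (cs.map fun c => moveEffect k n c.1 c.2).sum

@[simp] lemma totalEffect_nil : totalEffect k n [] = 0 := rfl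

@[simp] lemma totalEffect_cons (c : ℕ × (Fin k → ZMod 2)) (cs : List (ℕ × (Fin k → ZMod 2))) :
    totalEffect k n (c :: cs) = moveEffect k n c.1 c.2 + totalEffect k n cs := by
  simp [totalEffect]

lemma lastBits_totalEffect (cs : List (ℕ × (Fin k → ZMod 2))) (hcs : ∀ c ∈ cs, c.1 < n - k) :
    lastBits k n (totalEffect k n cs) = 0 := by
  induction cs with
  | nil => ext j; simp [lastBits]
  | cons c cs ih =>
    simp only [List.mem_cons, forall_eq_or_imp] at hcs
    rw [totalEffect_cons, lastBits_add, lastBits_moveEffect hcs.1, ih hcs.2, add_zero]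

lemma totalEffect_filter_add (P : ℕ × (Fin k → ZMod 2) → Bool)
    (cs : List (ℕ × (Fin k → ZMod 2))) :
    totalEffect k n (cs.filter P) + totalEffect k n (cs.filter fun c => !P c) =
      totalEffect k n cs := by
  simp only [totalEffect, ← List.sum_append, ← List.map_append]
  exact ((List.filter_append_perm P cs).map _).sum_eq

theorem exists_totalEffect_eq (q : ℕ) (d : Fin n → ZMod 2)
    (hd : ∀ i : Fin n, (i : ℕ) < q ∨ n - k ≤ i → d i = 0) :
    ∃ cs : List (ℕ × (Fin k → ZMod 2)), (∀ c ∈ cs, c.1 < n - k) ∧ totalEffect k n cs = d ∧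
      cs.length * (k + 1) ≤ n - q := by
  by_cases hq : q < n - k
  swap
  · exact ⟨[], by simp, by ext i; exact (hd i (by omega)).symm, by simp⟩
  by_cases hdq : ∀ i : Fin n, (i : ℕ) = q → d i = 0
  · obtain ⟨cs, hcs, hsum, hlen⟩ := exists_totalEffect_eq (q + 1) d fun i hi => by
      rcases hi with hi | hi
      · rcases Nat.lt_succ_iff_lt_or_eq.mp hi with hi | hi
        · exact hd i (Or.inl hi)
        · exact hdq i hi
      · exact hd i (Or.inr hi)
    exact ⟨cs, hcs, hsum, by omega⟩
  have hdq' : ∀ i : Fin n, (i : ℕ) = q → d i = 1 := by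
    push Not at hdq
    obtain ⟨i₀, hi₀, hne⟩ := hdq
    intro i hi
    obtain rfl : i = i₀ := Fin.ext (hi.trans hi₀.symm)
    simpa [hne] using ZMod.two_eq_or_eq_add_one 0 (d i)
  -- A single move at depth `q` clears `d` on `[q, q + k]`.
  obtain ⟨t, ht⟩ := exists_moveEffect_eqOn hq d (fun i hi => hd i (Or.inl hi)) hdq'
  obtain ⟨cs, hcs, hsum, hlen⟩ := exists_totalEffect_eq (q + k + 1) (d + moveEffect k n q t)
    fun i hi => by
      by_cases hin : (i : ℕ) < n - k
      · rw [Pi.add_apply, ht i (by omega) hin, CharTwo.add_self_eq_zero]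
      · rw [Pi.add_apply, hd i (Or.inr (by omega)), moveEffect_apply_of_le hq t (by omega),
          add_zero]
  refine ⟨(q, t) :: cs, by simpa [hq] using hcs, ?_, ?_⟩
  · ext i
    rw [totalEffect_cons, hsum, Pi.add_apply, Pi.add_apply, add_left_comm,
      CharTwo.add_self_eq_zero, add_zero]
  · rw [List.length_cons, add_mul, one_mul]
    omega
termination_by n - q

theorem edist_add_totalEffect_le (cs : List (ℕ × (Fin k → ZMod 2))) (v : Fin n → ZMod 2)
    (hcs : ∀ c ∈ cs, c.1 < n - k ∧ c.2 = lastBits k n v) :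
    (ZcubeK k n).edist v (v + totalEffect k n cs) ≤ cs.length := by
  induction cs generalizing v with
  | nil => simp
  | cons c cs ih =>
    simp only [List.mem_cons, forall_eq_or_imp] at hcs
    obtain ⟨⟨hc, hcv⟩, hcs⟩ := hcs
    have hmove : move k n c.1 v = v + moveEffect k n c.1 c.2 := by
      rw [hcv]; exact move_eq_add_moveEffect hc v
    have hlast : lastBits k n (move k n c.1 v) = lastBits k n v := by
      rw [hmove, lastBits_add, lastBits_moveEffect hc, add_zero]
    have h1 := SimpleGraph.edist_eq_one_iff_adj.mpr (adj_move (k := k) (by omega : c.1 < n) v)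
    have h2 := ih (move k n c.1 v) (fun c' hc' => by rw [hlast]; exact hcs c' hc')
    rw [hmove, add_assoc, ← totalEffect_cons] at h2
    rw [hmove] at h1
    calc _ ≤ _ := SimpleGraph.edist_triangle
      _ ≤ 1 + (cs.length : ℕ∞) := add_le_add h1.le h2
      _ = _ := by simp [add_comm]

theorem exists_edist_le_of_adj (hk : k ≤ n) {σ σ' : Fin k → ZMod 2}
    (hσ : (hypercube k).Adj σ σ') (v : Fin n → ZMod 2) (hv : lastBits k n v = σ)
    (cs : List (ℕ × (Fin k → ZMod 2))) (hcs : ∀ c ∈ cs, c.1 < n - k ∧ c.2 = σ) :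
    ∃ u, lastBits k n u = σ' ∧ (∀ i : Fin n, (i : ℕ) < n - k → u i = v i + totalEffect k n cs i) ∧
      (ZcubeK k n).edist v u ≤ cs.length + 1 := by
  obtain ⟨j, rfl⟩ := hσ
  set v₁ := v + totalEffect k n cs
  have h₁ : (ZcubeK k n).edist v v₁ ≤ cs.length :=
    edist_add_totalEffect_le cs v fun c hc => ⟨(hcs c hc).1, (hcs c hc).2.trans hv.symm⟩
  have hv₁ : lastBits k n v₁ = σ := by
    rw [lastBits_add, lastBits_totalEffect cs fun c hc => (hcs c hc).1, hv, add_zero]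
  have hadj := adj_move (k := k) (p := n - k + j) (by omega) v₁
  rw [move_eq_add_single (by omega) (by simp)] at hadj
  refine ⟨_, by rw [lastBits_add_single hk, hv₁], fun i hi => ?_, ?_⟩
  · simp [v₁, Fin.ext_iff, show (i : ℕ) ≠ n - k + j by omega]
  · calc _ ≤ _ := SimpleGraph.edist_triangle
      _ ≤ _ := add_le_add h₁ (SimpleGraph.edist_eq_one_iff_adj.mpr hadj).le

theorem exists_edist_le_of_walk (hk : k ≤ n) {σ b : Fin k → ZMod 2}
    (w : (hypercube k).Walk σ b) (v : Fin n → ZMod 2) (hv : lastBits k n v = σ)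
    (cs : List (ℕ × (Fin k → ZMod 2))) (hcs : ∀ c ∈ cs, c.1 < n - k ∧ c.2 ∈ w.support) :
    ∃ u, lastBits k n u = b ∧ (∀ i : Fin n, (i : ℕ) < n - k → u i = v i + totalEffect k n cs i) ∧
      (ZcubeK k n).edist v u ≤ cs.length + w.length := by
  induction w generalizing v cs with
  | nil =>
    refine ⟨v + totalEffect k n cs, ?_, fun i _ => rfl, ?_⟩
    · rw [lastBits_add, lastBits_totalEffect cs fun c hc => (hcs c hc).1, hv, add_zero]
    · simpa using edist_add_totalEffect_le cs v fun c hc => by simpa [hv] using hcs c hc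
  | @cons σ σ' b hσ w ih =>
    set P : ℕ × (Fin k → ZMod 2) → Bool := fun c => c.2 = σ
    obtain ⟨v', hv', hlow', hdist'⟩ := exists_edist_le_of_adj hk hσ v hv (cs.filter P)
      fun c hc => by
        simp only [P, List.mem_filter, decide_eq_true_eq] at hc
        exact ⟨(hcs c hc.1).1, hc.2⟩
    obtain ⟨u, hu, hlow, hdist⟩ := ih v' hv' (cs.filter fun c => !P c) fun c hc => by
      simp only [P, List.mem_filter, Bool.not_eq_true', decide_eq_false_iff_not] at hc
      obtain ⟨hlt, hmem⟩ := hcs c hc.1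
      rw [SimpleGraph.Walk.support_cons, List.mem_cons] at hmem
      exact ⟨hlt, by simpa [hc.2] using hmem⟩
    refine ⟨u, hu, fun i hi => ?_, ?_⟩
    · rw [hlow i hi, hlow' i hi, ← totalEffect_filter_add P cs, Pi.add_apply, add_assoc]
    · have hlen := List.length_eq_length_filter_add P (l := cs)
      calc _ ≤ _ := SimpleGraph.edist_triangle
        _ ≤ _ := add_le_add hdist' hdist
        _ = _ := by rw [SimpleGraph.Walk.length_cons, hlen]; push_cast; ring

theorem hypercube_le (h : n ≤ k) : hypercube n ≤ ZcubeK k n := by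
  rintro v _ ⟨j, rfl⟩
  rw [← move_eq_add_single (k := k) j.isLt (by omega)]
  exact adj_move j.isLt v

theorem edist_le (x y : Fin n → ZMod 2) :
    (ZcubeK k n).edist x y ≤ (n / (k + 1) + 2 ^ k : ℕ) := by
  rcases le_or_gt n k with hnk | hkn
  · obtain ⟨w, hw, -⟩ := hypercube.exists_covering_walk x y
    have hpow : 2 ^ n ≤ 2 ^ k := Nat.pow_le_pow_right two_pos hnk
    calc (ZcubeK k n).edist x y ≤ (hypercube n).edist x y :=
          SimpleGraph.edist_anti (hypercube_le hnk)
      _ ≤ w.length := SimpleGraph.edist_le w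
      _ ≤ (n / (k + 1) + 2 ^ k : ℕ) :=
          Nat.cast_le.mpr ((hw.trans hpow).trans (Nat.le_add_left _ _))
  obtain ⟨cs, hcs, hsum, hlen⟩ := exists_totalEffect_eq (k := k) 0
    (fun i => if (i : ℕ) < n - k then x i + y i else 0) fun i hi => by
      rw [if_neg (by omega)]
  obtain ⟨w, hw, hcov⟩ := hypercube.exists_covering_walk (lastBits k n x) (lastBits k n y)
  obtain ⟨u, hu, hulow, hdist⟩ :=
    exists_edist_le_of_walk hkn.le w x rfl cs fun c hc => ⟨hcs c hc, hcov c.2⟩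
  obtain rfl : u = y := eq_of_lastBits_eq hu fun i hi => by
    simp only [hulow i hi, hsum, if_pos hi, CharTwo.add_cancel_left]
  have hcs_len : cs.length ≤ n / (k + 1) := (Nat.le_div_iff_mul_le k.succ_pos).mpr hlen
  exact hdist.trans (by exact_mod_cast Nat.add_le_add hcs_len hw)

end ZcubeK

theorem zcubeK_diam_upper_general (k n : ℕ) :
    ((ZcubeK k n).diam : ℝ) ≤ (n : ℝ) / (k + 1) + 2 ^ k := by
  have hdiam : (ZcubeK k n).diam ≤ n / (k + 1) + 2 ^ k :=
    ENat.toNat_le_of_le_natCast (SimpleGraph.ediam_le_of_edist_le ZcubeK.edist_le)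
  calc ((ZcubeK k n).diam : ℝ) ≤ ((n / (k + 1) : ℕ) : ℝ) + 2 ^ k := by exact_mod_cast hdiam
    _ ≤ (n : ℝ) / (k + 1) + 2 ^ k := by
      gcongr
      exact_mod_cast Nat.cast_div_le

/-- for each fixed `k ≥ 0` and all `n ≥ 1`, the graph `Z_{n,k}` has
diameter at most `n/(k+1) + 2^k`. -/
theorem zcubeK_diam_upper (k n : ℕ) (hn : 1 ≤ n) :
    ((ZcubeK k n).diam : ℝ) ≤ (n : ℝ) / (k + 1) + 2 ^ k :=
  zcubeK_diam_upper_general k n
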